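/- Let x = (x₀, x') and y = (y₀, y') ∈ ℝ × ℝ³ with x' ≠ y'. Define p_κ^x(u) = (κ²/(2π))·exp(−κ²|u−x|²/4) on ℝ⁴ and (∂₀⁻¹p_κ^y)(u₀, u') = (1/2)∫_{−∞}^{u₀} p_κ^y(τ, u') dτ − (1/2)∫_{u₀}^∞ p_κ^y(τ, u') dτ. Then lim_{κ→∞} κ³ ∫_{ℝ⁴} p_κ^x(u) (∂₀⁻¹p_κ^y)(u) du = 0. -/

import Mathlib

open MeasureTheory Real Filter

/-- The 4-dimensional Gaussian `p_κ^x` on `ℝ × ℝ³`, centered at `x`, with variance `1/κ²`. -/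
noncomputable def pGauss4 (κ : ℝ) (x u : ℝ × EuclideanSpace ℝ (Fin 3)) : ℝ :=
  κ ^ 2 / (2 * Real.pi) * Real.exp (-(κ ^ 2) * ((u.1 - x.1) ^ 2 + ‖u.2 - x.2‖ ^ 2) / 4)

/-- The symmetrized antiderivative `∂₀⁻¹ p_κ^y` in the time variable. -/
noncomputable def timeAntideriv (κ : ℝ) (y : ℝ × EuclideanSpace ℝ (Fin 3))
    (u : ℝ × EuclideanSpace ℝ (Fin 3)) : ℝ :=
  (1 / 2) * (∫ τ in Set.Iic u.1, pGauss4 κ y (τ, u.2)) -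
    (1 / 2) * ∫ τ in Set.Ici u.1, pGauss4 κ y (τ, u.2)

/-! Bounding `|∂₀⁻¹ p_κ^y|` by half the full time integral of `p_κ^y` dominates the
integrand by a Gaussian in time times a Gaussian in space. Apollonius' identity
`‖v - x'‖² + ‖v - y'‖² = 2 ‖v - m‖² + ‖x' - y'‖² / 2`, with `m` the midpoint of `x'`
and `y'`, splits off the factor `exp (-κ² ‖x' - y'‖² / 8)`, and the remaining Gaussian
integrals give `|⟨p_κ^x, ∂₀⁻¹ p_κ^y⟩| ≤ √(2π) / κ · exp (-κ² ‖x' - y'‖² / 8)`,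
which beats `κ³`. -/

local notation "E3" => EuclideanSpace ℝ (Fin 3)

section Gaussian

variable {V : Type*} [NormedAddCommGroup V] [InnerProductSpace ℝ V]

theorem exp_neg_mul_sq_norm_sub_mul_exp_neg_mul_sq_norm_sub (a : ℝ) (v x y : V) :
    rexp (-a * ‖v - x‖ ^ 2) * rexp (-a * ‖v - y‖ ^ 2) =
      rexp (-(a / 2) * ‖x - y‖ ^ 2) * rexp (-(2 * a) * ‖v - midpoint ℝ x y‖ ^ 2) := by
  have := EuclideanGeometry.dist_sq_add_dist_sq_eq_two_mul_dist_midpoint_sq_add_half_dist_sq v x y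
  simp only [dist_eq_norm] at this
  rw [← Real.exp_add, ← Real.exp_add]
  congr 1
  linear_combination (-a) * this

variable [FiniteDimensional ℝ V] [MeasurableSpace V] [BorelSpace V]

theorem integrable_exp_neg_mul_sq_norm_sub {b : ℝ} (hb : 0 < b) (m : V) :
    Integrable fun v : V => rexp (-b * ‖v - m‖ ^ 2) := by
  have h : Integrable fun v : V => rexp (-b * ‖v‖ ^ 2) := by
    refine (GaussianFourier.integrable_cexp_neg_mul_sq_norm_add
      (V := V) (b := (b : ℂ)) (by simpa) 0 0).norm.congr (ae_of_all _ fun v => ?_)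
    simp [Complex.norm_exp, ← Complex.ofReal_pow]
  exact h.comp_sub_right m

theorem integral_exp_neg_mul_sq_norm_sub {b : ℝ} (hb : 0 < b) (m : V) :
    ∫ v : V, rexp (-b * ‖v - m‖ ^ 2) = (π / b) ^ (Module.finrank ℝ V / 2 : ℝ) := by
  rw [integral_sub_right_eq_self (fun v : V => rexp (-b * ‖v‖ ^ 2)) m,
    GaussianFourier.integral_rexp_neg_mul_sq_norm hb]

end Gaussian

theorem abs_half_setIntegral_Iic_sub_half_setIntegral_Ici_le {f : ℝ → ℝ} (hf : Integrable f)
    (hf0 : 0 ≤ f) (a : ℝ) :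
    |(1 / 2) * (∫ τ in Set.Iic a, f τ) - (1 / 2) * ∫ τ in Set.Ici a, f τ| ≤
      (1 / 2) * ∫ τ, f τ := by
  have hIic := setIntegral_le_integral (s := Set.Iic a) hf (ae_of_all _ hf0)
  have hIci := setIntegral_le_integral (s := Set.Ici a) hf (ae_of_all _ hf0)
  have hIic0 : 0 ≤ ∫ τ in Set.Iic a, f τ :=
    setIntegral_nonneg measurableSet_Iic fun τ _ => hf0 τ
  have hIci0 : 0 ≤ ∫ τ in Set.Ici a, f τ :=
    setIntegral_nonneg measurableSet_Ici fun τ _ => hf0 τ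
  rw [abs_le]
  constructor <;> linarith

theorem tendsto_sq_mul_exp_neg_mul_sq_atTop {c : ℝ} (hc : 0 < c) :
    Tendsto (fun κ : ℝ => κ ^ 2 * rexp (-c * κ ^ 2)) atTop (nhds 0) := by
  have h := (tendsto_pow_mul_exp_neg_atTop_nhds_zero 1).const_mul c⁻¹ |>.comp
    ((tendsto_pow_atTop two_ne_zero).const_mul_atTop hc)
  refine Tendsto.congr (fun κ => ?_) (by simpa using h)
  simp only [Function.comp_apply]
  field_simp

theorem pGauss4_eq (κ : ℝ) (x u : ℝ × E3) :
    pGauss4 κ x u = κ ^ 2 / (2 * π) * rexp (-(κ ^ 2 / 4) * (u.1 - x.1) ^ 2) *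
      rexp (-(κ ^ 2 / 4) * ‖u.2 - x.2‖ ^ 2) := by
  rw [pGauss4, mul_assoc, ← Real.exp_add]
  ring_nf

theorem pGauss4_nonneg (κ : ℝ) (x u : ℝ × E3) : 0 ≤ pGauss4 κ x u := by
  unfold pGauss4; positivity

theorem integral_exp_neg_mul_sq_sub {κ : ℝ} (hκ : 0 < κ) (c : ℝ) :
    ∫ t : ℝ, rexp (-(κ ^ 2 / 4) * (t - c) ^ 2) = 2 * √π / κ := by
  rw [integral_sub_right_eq_self (fun t => rexp (-(κ ^ 2 / 4) * t ^ 2)) c, integral_gaussian,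
    show π / (κ ^ 2 / 4) = (2 * √π / κ) ^ 2 by
      rw [div_pow, mul_pow, sq_sqrt pi_pos.le]; field_simp; ring,
    sqrt_sq (by positivity)]

theorem integrable_pGauss4_slice {κ : ℝ} (hκ : 0 < κ) (y : ℝ × E3) (v : E3) :
    Integrable fun τ : ℝ => pGauss4 κ y (τ, v) := by
  simp only [pGauss4_eq]
  exact ((integrable_exp_neg_mul_sq (by positivity : 0 < κ ^ 2 / 4)).comp_sub_right y.1
    |>.const_mul _).mul_const _

theorem integral_pGauss4_slice {κ : ℝ} (hκ : 0 < κ) (y : ℝ × E3) (v : E3) :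
    ∫ τ : ℝ, pGauss4 κ y (τ, v) = κ / √π * rexp (-(κ ^ 2 / 4) * ‖v - y.2‖ ^ 2) := by
  simp only [pGauss4_eq]
  rw [integral_mul_const, integral_const_mul, integral_exp_neg_mul_sq_sub hκ]
  field_simp
  rw [sq_sqrt pi_pos.le]

theorem abs_timeAntideriv_le {κ : ℝ} (hκ : 0 < κ) (y u : ℝ × E3) :
    |timeAntideriv κ y u| ≤ κ / (2 * √π) * rexp (-(κ ^ 2 / 4) * ‖u.2 - y.2‖ ^ 2) := by
  have h := abs_half_setIntegral_Iic_sub_half_setIntegral_Ici_le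
    (integrable_pGauss4_slice hκ y u.2) (fun τ => pGauss4_nonneg κ y (τ, u.2)) u.1
  rw [integral_pGauss4_slice hκ] at h
  rw [timeAntideriv]
  convert h using 1
  ring

theorem norm_pGauss4_mul_timeAntideriv_le {κ : ℝ} (hκ : 0 < κ) (x y u : ℝ × E3) :
    ‖pGauss4 κ x u * timeAntideriv κ y u‖ ≤
      κ ^ 2 / (2 * π) * rexp (-(κ ^ 2 / 4) * (u.1 - x.1) ^ 2) *
        (κ / (2 * √π) * rexp (-(κ ^ 2 / 8) * ‖x.2 - y.2‖ ^ 2) *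
          rexp (-(κ ^ 2 / 2) * ‖u.2 - midpoint ℝ x.2 y.2‖ ^ 2)) := by
  have hsplit := exp_neg_mul_sq_norm_sub_mul_exp_neg_mul_sq_norm_sub (κ ^ 2 / 4) u.2 x.2 y.2
  rw [show κ ^ 2 / 4 / 2 = κ ^ 2 / 8 by ring, show 2 * (κ ^ 2 / 4) = κ ^ 2 / 2 by ring]
    at hsplit
  calc ‖pGauss4 κ x u * timeAntideriv κ y u‖
      = pGauss4 κ x u * |timeAntideriv κ y u| := by
        rw [norm_mul, Real.norm_of_nonneg (pGauss4_nonneg κ x u), Real.norm_eq_abs]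
    _ ≤ pGauss4 κ x u * (κ / (2 * √π) * rexp (-(κ ^ 2 / 4) * ‖u.2 - y.2‖ ^ 2)) :=
        mul_le_mul_of_nonneg_left (abs_timeAntideriv_le hκ y u) (pGauss4_nonneg κ x u)
    _ = _ := by
        rw [pGauss4_eq]
        linear_combination
          κ ^ 2 / (2 * π) * rexp (-(κ ^ 2 / 4) * (u.1 - x.1) ^ 2) * (κ / (2 * √π)) * hsplit

theorem abs_integral_pGauss4_mul_timeAntideriv_le {κ : ℝ} (hκ : 0 < κ) (x y : ℝ × E3) :
    |∫ u, pGauss4 κ x u * timeAntideriv κ y u| ≤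
      √(2 * π) / κ * rexp (-(κ ^ 2 / 8) * ‖x.2 - y.2‖ ^ 2) := by
  set e := rexp (-(κ ^ 2 / 8) * ‖x.2 - y.2‖ ^ 2)
  let F : ℝ → ℝ := fun t => κ ^ 2 / (2 * π) * rexp (-(κ ^ 2 / 4) * (t - x.1) ^ 2)
  let G : E3 → ℝ := fun v =>
    κ / (2 * √π) * e * rexp (-(κ ^ 2 / 2) * ‖v - midpoint ℝ x.2 y.2‖ ^ 2)
  have hκ2 : 0 < κ ^ 2 / 2 := by positivity
  have hF : Integrable F :=
    ((integrable_exp_neg_mul_sq (by positivity)).comp_sub_right x.1).const_mul _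
  have hG : Integrable G := (integrable_exp_neg_mul_sq_norm_sub hκ2 _).const_mul _
  have hvol : (volume : Measure (ℝ × E3)) = volume.prod volume := Measure.volume_eq_prod _ _
  have h2π : π / (κ ^ 2 / 2) = (√(2 * π) / κ) ^ 2 := by
    rw [div_pow, sq_sqrt (by positivity)]
    field_simp
  calc |∫ u, pGauss4 κ x u * timeAntideriv κ y u|
      ≤ ∫ u : ℝ × E3, F u.1 * G u.2 := norm_integral_le_of_norm_le (hvol ▸ hF.mul_prod hG)
        (ae_of_all _ (norm_pGauss4_mul_timeAntideriv_le hκ x y))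
    _ = (∫ t, F t) * ∫ v, G v := by rw [hvol, integral_prod_mul]
    _ = κ / √π * (κ / (2 * √π) * e * (√(2 * π) / κ) ^ 3) := by
        simp only [F, G]
        rw [integral_const_mul, integral_const_mul, integral_exp_neg_mul_sq_sub hκ,
          integral_exp_neg_mul_sq_norm_sub hκ2, finrank_euclideanSpace_fin, h2π,
          rpow_div_two_eq_sqrt _ (by positivity), sqrt_sq (by positivity)]
        norm_cast
        field_simp
        rw [sq_sqrt pi_pos.le]
    _ = √(2 * π) / κ * e := by
        field_simp
        rw [sq_sqrt pi_pos.le, sq_sqrt (by positivity)]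
        ring

theorem pairing_decay (x y : ℝ × EuclideanSpace ℝ (Fin 3)) (h : x.2 ≠ y.2) :
    Tendsto (fun κ : ℝ => κ ^ 3 *
      ∫ u : ℝ × EuclideanSpace ℝ (Fin 3), pGauss4 κ x u * timeAntideriv κ y u)
      atTop (nhds 0) := by
  have hc : 0 < ‖x.2 - y.2‖ ^ 2 / 8 := by
    have := norm_pos_iff.mpr (sub_ne_zero.mpr h)
    positivity
  have hlim := (tendsto_sq_mul_exp_neg_mul_sq_atTop hc).const_mul √(2 * π)
  rw [mul_zero] at hlim
  refine squeeze_zero_norm' ?_ hlim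
  filter_upwards [eventually_gt_atTop 0] with κ hκ
  calc ‖κ ^ 3 * ∫ u, pGauss4 κ x u * timeAntideriv κ y u‖
      = κ ^ 3 * |∫ u, pGauss4 κ x u * timeAntideriv κ y u| := by
        rw [norm_mul, Real.norm_of_nonneg (by positivity), Real.norm_eq_abs]
    _ ≤ κ ^ 3 * (√(2 * π) / κ * rexp (-(κ ^ 2 / 8) * ‖x.2 - y.2‖ ^ 2)) := by
        gcongr
        exact abs_integral_pGauss4_mul_timeAntideriv_le hκ x y
    _ = √(2 * π) * (κ ^ 2 * rexp (-(‖x.2 - y.2‖ ^ 2 / 8) * κ ^ 2)) := by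
        field_simp
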